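/- For any minimizer X of the problem: minimize ‖X−A‖_F over nonnegative matrices X with ρ(X)=0, where A is Boolean, the matrix X is itself Boolean and satisfies X ≤ A entrywise. -/

import Mathlib

/-!
Spectral radius zero means nilpotent. For a nonnegative matrix `X`, `(X ^ k) i j = 0` forces every
path product from `i` to `j` of length `k` to vanish, so any `Y` whose support lies in that of `X`
satisfies `(Y ^ k) i j = 0` as well; nilpotency passes from `X` to `Y`. Hence rounding a feasible
`X` to `Y i j = if X i j = 0 then 0 else A i j` stays feasible. Entrywise `Y` is no farther from
`A` than `X`, and strictly closer wherever `X i j ∉ {0, A i j}`, so a minimizer takes values in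
`{0, A i j}`.
-/

/-- Spectral radius of a real square matrix. -/
noncomputable def specRad {m : Type*} [Fintype m] [DecidableEq m]
    (A : Matrix m m ℝ) : ℝ :=
  sSup ((fun μ : ℂ => ‖μ‖) '' spectrum ℂ (A.map (algebraMap ℝ ℂ)))

/-- Frobenius norm of a real matrix. -/
noncomputable def frob {n : ℕ} (M : Matrix (Fin n) (Fin n) ℝ) : ℝ :=
  Real.sqrt (∑ i, ∑ j, (M i j) ^ 2)

open Polynomial in
theorem Polynomial.Monic.eq_X_pow_of_roots_eq_zero {K : Type*} [Field K] {p : K[X]}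
    (hp : p.Monic) (hs : p.Splits) (h : ∀ μ ∈ p.roots, μ = 0) : p = X ^ p.natDegree := by
  rw [hs.eq_prod_roots_of_monic hp, Multiset.eq_replicate_card.mpr h]
  simp

theorem IsNilpotent.spectrum_subset_zero {K A : Type*} [Field K] [Ring A] [Algebra K A]
    {a : A} (ha : IsNilpotent a) : spectrum K a ⊆ {0} := by
  obtain ⟨k, hk⟩ := ha
  intro μ hμ
  by_contra hμ0
  have hpow := spectrum.pow_mem_pow a k hμ
  rw [hk, spectrum.mem_iff, sub_zero] at hpow
  exact hpow ((IsUnit.mk0 _ (pow_ne_zero k hμ0)).map (algebraMap K A))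

open Polynomial in
theorem Matrix.isNilpotent_iff_spectrum_subset_zero {K m : Type*} [Field K] [IsAlgClosed K]
    [Fintype m] [DecidableEq m] (M : Matrix m m K) : IsNilpotent M ↔ spectrum K M ⊆ {0} := by
  refine ⟨IsNilpotent.spectrum_subset_zero, fun h => ⟨Fintype.card m, ?_⟩⟩
  have hroots : ∀ μ ∈ M.charpoly.roots, μ = 0 := fun μ hμ =>
    h (M.mem_spectrum_iff_isRoot_charpoly.mpr (isRoot_of_mem_roots hμ))
  have hcp := M.charpoly_monic.eq_X_pow_of_roots_eq_zero (IsAlgClosed.splits _) hroots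
  rw [M.charpoly_natDegree_eq_dim] at hcp
  simpa [hcp] using M.aeval_self_charpoly

theorem specRad_eq_zero_iff_spectrum_subset_zero {m : Type*} [Fintype m] [DecidableEq m]
    (M : Matrix m m ℝ) : specRad M = 0 ↔ spectrum ℂ (M.map (algebraMap ℝ ℂ)) ⊆ {0} := by
  constructor
  · intro h μ hμ
    have hle : ‖μ‖ ≤ specRad M :=
      le_csSup ((Matrix.finite_spectrum _).image _).bddAbove ⟨μ, hμ, rfl⟩
    simpa [h] using hle
  · intro h
    rcases Set.subset_singleton_iff_eq.mp h with h | h <;> simp only [specRad, h] <;> simp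

theorem specRad_eq_zero_iff_isNilpotent {m : Type*} [Fintype m] [DecidableEq m]
    (M : Matrix m m ℝ) : specRad M = 0 ↔ IsNilpotent M := by
  rw [specRad_eq_zero_iff_spectrum_subset_zero, ← Matrix.isNilpotent_iff_spectrum_subset_zero]
  exact IsNilpotent.map_iff (f := (algebraMap ℝ ℂ).mapMatrix)
    (Matrix.map_injective (algebraMap ℝ ℂ).injective)

namespace Matrix

variable {R m : Type*} [Semiring R] [PartialOrder R] [IsOrderedRing R] [NoZeroDivisors R]
  [Fintype m] [DecidableEq m] {X Y : Matrix m m R}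

theorem pow_apply_eq_zero_of_support_subset (hX : ∀ i j, 0 ≤ X i j)
    (hXY : ∀ i j, X i j = 0 → Y i j = 0) (k : ℕ) (i j : m) :
    (X ^ k) i j = 0 → (Y ^ k) i j = 0 := by
  induction k generalizing j with
  | zero => simp [one_apply]
  | succ k ih =>
    intro h
    rw [pow_succ, mul_apply] at h ⊢
    have hterms := (Finset.sum_eq_zero_iff_of_nonneg
      fun l _ => mul_nonneg (pow_apply_nonneg hX k i l) (hX l j)).mp h
    refine Finset.sum_eq_zero fun l hl => ?_
    rcases mul_eq_zero.mp (hterms l hl) with h | h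
    · rw [ih l h, zero_mul]
    · rw [hXY l j h, mul_zero]

theorem isNilpotent_of_support_subset (hX : ∀ i j, 0 ≤ X i j)
    (hXY : ∀ i j, X i j = 0 → Y i j = 0) (hXn : IsNilpotent X) : IsNilpotent Y := by
  obtain ⟨k, hk⟩ := hXn
  refine ⟨k, ext fun i j => pow_apply_eq_zero_of_support_subset hX hXY k i j ?_⟩
  rw [hk, zero_apply]

end Matrix

theorem frob_lt_of_sq_apply_le_of_sq_apply_lt {n : ℕ} {M N : Matrix (Fin n) (Fin n) ℝ}
    (hle : ∀ i j, M i j ^ 2 ≤ N i j ^ 2) {i j : Fin n} (hlt : M i j ^ 2 < N i j ^ 2) :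
    frob M < frob N := by
  refine Real.sqrt_lt_sqrt (by positivity) ?_
  exact Finset.sum_lt_sum (fun i _ => Finset.sum_le_sum fun j _ => hle i j)
    ⟨i, Finset.mem_univ _, Finset.sum_lt_sum (fun j _ => hle i j) ⟨j, Finset.mem_univ _, hlt⟩⟩

/-- Any minimizer `X` of `‖X - A‖_F` over the set of entrywise nonnegative
matrices with spectral radius `0`, where `A` is Boolean, is itself a Boolean
matrix and satisfies `X ≤ A` entrywise. -/
theorem stmt7 {n : ℕ} (A X : Matrix (Fin n) (Fin n) ℝ)
    (hA : ∀ i j, A i j = 0 ∨ A i j = 1)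
    (hX0 : ∀ i j, 0 ≤ X i j) (hXρ : specRad X = 0)
    (hmin : ∀ Y : Matrix (Fin n) (Fin n) ℝ,
      (∀ i j, 0 ≤ Y i j) → specRad Y = 0 → frob (X - A) ≤ frob (Y - A)) :
    (∀ i j, X i j = 0 ∨ X i j = 1) ∧ (∀ i j, X i j ≤ A i j) := by
  have hA0 : ∀ i j, 0 ≤ A i j := fun i j => by rcases hA i j with h | h <;> simp [h]
  set Y : Matrix (Fin n) (Fin n) ℝ := Matrix.of fun i j => if X i j = 0 then 0 else A i j
  have hY0 : ∀ i j, 0 ≤ Y i j := fun i j => by by_cases h : X i j = 0 <;> simp [Y, h, hA0]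
  have hYρ : specRad Y = 0 := (specRad_eq_zero_iff_isNilpotent Y).mpr <|
    Matrix.isNilpotent_of_support_subset hX0 (fun i j h => by simp [Y, h])
      ((specRad_eq_zero_iff_isNilpotent X).mp hXρ)
  have hXA : ∀ i j, X i j ≠ 0 → X i j = A i j := by
    intro i j hXij
    by_contra hne
    refine (hmin Y hY0 hYρ).not_gt <|
      frob_lt_of_sq_apply_le_of_sq_apply_lt (i := i) (j := j) (fun k l => ?_) ?_
    · by_cases h : X k l = 0 <;> simp [Y, h, sq_nonneg]
    · simpa [Y, hXij] using sq_pos_of_ne_zero (sub_ne_zero.mpr hne)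
  refine ⟨fun i j => ?_, fun i j => ?_⟩ <;> by_cases h : X i j = 0
  · exact Or.inl h
  · exact Or.inr ((hXA i j h).trans ((hA i j).resolve_left (hXA i j h ▸ h)))
  · simp [h, hA0]
  · exact (hXA i j h).le
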